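/- arXiv:2201.05737 — 5 statements merged into one kernel-verified Lean document; each statement's English description precedes it below -/
import Mathlib

section
/- Deviation of pseudo discounted mean-variance: with η = (1-α) μ (I - αP)^{-1} r, ξ = (1-α) μ (I - αP)^{-1} [r - β (r - η e)_⊙^2], and ξ_λ = (1-α) μ (I - αP)^{-1} [r - β (r - λ e)_⊙^2], one has ξ_λ = ξ - β (η - λ)^2 for every λ ∈ ℝ. -/
/-!
Since `P` is row-stochastic, `(1 - α P) 1 = (1 - α) 1`, so the discounted occupation weights
`v = (1 - α) μ (1 - α P)⁻¹` sum to one and `η = v ⬝ r` is their mean of `r`. The claim is then the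
bias–variance decomposition `v ⬝ (r - λ)² = v ⬝ (r - η)² + (η - λ)²`.
-/

open Matrix

namespace Matrix

variable {ι : Type*} [Fintype ι] [DecidableEq ι]

section LinftyOpNorm

attribute [local instance] Matrix.linftyOpNormedAddCommGroup Matrix.linftyOpNormedSpace
  Matrix.linftyOpNormedRing Matrix.linftyOpNormedAlgebra

theorem linfty_opNNNorm_le_one_of_mem_rowStochastic {P : Matrix ι ι ℝ}
    (hP : P ∈ rowStochastic ℝ ι) : ‖P‖₊ ≤ 1 := by
  rw [linfty_opNNNorm_def]
  refine Finset.sup_le fun i _ => le_of_eq ?_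
  rw [← NNReal.coe_inj]
  push_cast
  simp_rw [Real.norm_of_nonneg (nonneg_of_mem_rowStochastic hP)]
  exact sum_row_of_mem_rowStochastic hP i

theorem isUnit_one_sub_smul_of_mem_rowStochastic {P : Matrix ι ι ℝ}
    (hP : P ∈ rowStochastic ℝ ι) {α : ℝ} (hα : |α| < 1) : IsUnit (1 - α • P) := by
  have : CompleteSpace (Matrix ι ι ℝ) := FiniteDimensional.complete ℝ _
  have hnorm : ‖α • P‖ < 1 :=
    calc ‖α • P‖ = |α| * ‖P‖ := by rw [norm_smul, Real.norm_eq_abs]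
      _ ≤ |α| * 1 := by
        gcongr; exact_mod_cast linfty_opNNNorm_le_one_of_mem_rowStochastic hP
      _ < 1 := by linarith
  exact (Units.oneSub (α • P) hnorm).isUnit

end LinftyOpNorm

theorem one_sub_smul_mul_inv_mulVec_one {P : Matrix ι ι ℝ} (hP : P *ᵥ 1 = 1) {α : ℝ}
    (hunit : IsUnit (1 - α • P)) : (1 - α) • ((1 - α • P)⁻¹ *ᵥ 1) = 1 := by
  have hfix : (1 - α • P) *ᵥ 1 = (1 - α) • (1 : ι → ℝ) := by
    rw [sub_mulVec, smul_mulVec, hP, one_mulVec, sub_smul, one_smul]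
  rw [← mulVec_smul, ← hfix, mulVec_mulVec,
    nonsing_inv_mul _ ((isUnit_iff_isUnit_det _).mp hunit), one_mulVec]

end Matrix

theorem dotProduct_sub_mul_sq_sub {ι : Type*} [Fintype ι] {v : ι → ℝ} (hv : v ⬝ᵥ 1 = 1)
    (r : ι → ℝ) (β l : ℝ) :
    v ⬝ᵥ (fun i => r i - β * (r i - l) ^ 2) =
      v ⬝ᵥ (fun i => r i - β * (r i - v ⬝ᵥ r) ^ 2) - β * (v ⬝ᵥ r - l) ^ 2 := by
  set η := v ⬝ᵥ r
  rw [dotProduct_one] at hv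
  -- `(r - λ)² = (r - η)² + 2 (η - λ)(r - η) + (η - λ)²`, and `v ⬝ (r - η) = 0`
  have hsplit : ∀ i, v i * (r i - β * (r i - l) ^ 2) = v i * (r i - β * (r i - η) ^ 2)
      - β * (η - l) ^ 2 * v i - 2 * β * (η - l) * (v i * r i - η * v i) := fun i => by ring
  simp only [dotProduct, hsplit, Finset.sum_sub_distrib, ← Finset.mul_sum, hv]
  have hη : ∑ i, v i * r i = η := rfl
  rw [hη]
  ring

theorem stmt_7_general {n : ℕ} (P : Matrix (Fin n) (Fin n) ℝ)
    (hPnn : ∀ i j, 0 ≤ P i j) (hProw : ∀ i, ∑ j, P i j = 1)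
    (μ : Fin n → ℝ) (hμsum : ∑ i, μ i = 1)
    (r : Fin n → ℝ) (α β : ℝ) (hα0 : 0 < α) (hα1 : α < 1)
    (η ξ : ℝ) (l : ℝ) (ξl : ℝ)
    (hη : η = (1 - α) * ((μ ᵥ* (1 - α • P)⁻¹) ⬝ᵥ r))
    (hξ : ξ = (1 - α) * ((μ ᵥ* (1 - α • P)⁻¹) ⬝ᵥ (fun i => r i - β * (r i - η) ^ 2)))
    (hξl : ξl = (1 - α) * ((μ ᵥ* (1 - α • P)⁻¹) ⬝ᵥ (fun i => r i - β * (r i - l) ^ 2))) :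
    ξl = ξ - β * (η - l) ^ 2 := by
  have hP : P ∈ rowStochastic ℝ (Fin n) := mem_rowStochastic_iff_sum.2 ⟨hPnn, hProw⟩
  have hunit := isUnit_one_sub_smul_of_mem_rowStochastic hP (abs_lt.2 ⟨by linarith, hα1⟩)
  set v := (1 - α) • (μ ᵥ* (1 - α • P)⁻¹)
  have hv : v ⬝ᵥ 1 = 1 := by
    rw [smul_dotProduct, ← dotProduct_mulVec, ← dotProduct_smul,
      one_sub_smul_mul_inv_mulVec_one hP.2 hunit, dotProduct_one, hμsum]
  have hv_dot : ∀ x, (1 - α) * ((μ ᵥ* (1 - α • P)⁻¹) ⬝ᵥ x) = v ⬝ᵥ x := fun x =>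
    (smul_dotProduct (1 - α) _ x).symm
  rw [hv_dot] at hη hξ hξl
  rw [hξl, hξ, hη]
  exact dotProduct_sub_mul_sq_sub hv r β l

/-- Deviation of the pseudo discounted mean-variance: `ξ_λ = ξ - β (η - λ)²`. -/
theorem stmt_7 {n : ℕ} (P : Matrix (Fin n) (Fin n) ℝ)
    (hPnn : ∀ i j, 0 ≤ P i j) (hProw : ∀ i, ∑ j, P i j = 1)
    (μ : Fin n → ℝ) (hμnn : ∀ i, 0 ≤ μ i) (hμsum : ∑ i, μ i = 1)
    (r : Fin n → ℝ) (α β : ℝ) (hα0 : 0 < α) (hα1 : α < 1) (hβ : 0 < β)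
    (η ξ : ℝ) (l : ℝ) (ξl : ℝ)
    (hη : η = (1 - α) * ((μ ᵥ* (1 - α • P)⁻¹) ⬝ᵥ r))
    (hξ : ξ = (1 - α) * ((μ ᵥ* (1 - α • P)⁻¹) ⬝ᵥ (fun i => r i - β * (r i - η) ^ 2)))
    (hξl : ξl = (1 - α) * ((μ ᵥ* (1 - α • P)⁻¹) ⬝ᵥ (fun i => r i - β * (r i - l) ^ 2))) :
    ξl = ξ - β * (η - l) ^ 2 :=
  stmt_7_general P hPnn hProw μ hμsum r α β hα0 hα1 η ξ l ξl hη hξ hξl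
end

section
/- Discounted mean-variance performance difference formula: with ξ = μ u defined via u = (1-α)(I - αP)^{-1} f where f = r - β(r - η e)_⊙^2, η = (1-α)μ(I - αP)^{-1} r, and primed quantities defined analogously for (P', r'), for any λ ∈ ℝ: ξ' - ξ = μ (I - αP')^{-1} [ (1-α)(f'_λ - f_λ) + α (P' - P) u_λ ] + β(η' - λ)^2 - β(η - λ)^2, where f_λ = r - β(r - λ e)_⊙^2, f'_λ = r' - β(r' - λ e)_⊙^2, and u_λ = (1-α)(I - αP)^{-1} f_λ. -/
/-!
Let `d = (1 - α) μ (I - αP)⁻¹` be the normalized discounted occupancy measure, so that `ξ = d f`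
and `η = d r`. As `P` is stochastic, `d` has total mass one, and the König–Huygens identity
`d (r - λ)² = d (r - η)² + (η - λ)²` gives `ξ = μ u_λ + β (η - λ)²`. What is left, `μ (u'_λ - u_λ)`,
is the linear performance-difference formula, which comes from `α (P' - P) = (I - αP) - (I - αP')`.
-/

open Matrix

section MeanVariance

variable {ι R : Type*} [Fintype ι] [CommRing R]

def mvReward (β l : R) (r : ι → R) : ι → R := fun i => r i - β * (r i - l) ^ 2

theorem dotProduct_mvReward_of_dotProduct_eq {w r : ι → R} {η : R} (hw : ∑ i, w i = 1)
    (hη : w ⬝ᵥ r = η) (β l : R) :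
    w ⬝ᵥ mvReward β η r = w ⬝ᵥ mvReward β l r + β * (η - l) ^ 2 := by
  have hsplit : w ⬝ᵥ mvReward β η r = w ⬝ᵥ mvReward β l r
      + 2 * β * (η - l) * (w ⬝ᵥ r) - β * (η - l) * (η + l) * ∑ i, w i := by
    simp only [dotProduct, mvReward, Finset.mul_sum, ← Finset.sum_add_distrib,
      ← Finset.sum_sub_distrib]
    exact Finset.sum_congr rfl fun i _ => by ring
  rw [hsplit, hη, hw]
  ring

end MeanVariance

section Discounted

variable {ι R : Type*} [Fintype ι] [DecidableEq ι] [CommRing R]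

noncomputable def discountedValue (α : R) (P : Matrix ι ι R) (g : ι → R) : ι → R :=
  (1 - α) • ((1 - α • P)⁻¹ *ᵥ g)

noncomputable def occupancy (α : R) (P : Matrix ι ι R) (μ : ι → R) : ι → R :=
  (1 - α) • (μ ᵥ* (1 - α • P)⁻¹)

theorem dotProduct_discountedValue (α : R) (P : Matrix ι ι R) (μ g : ι → R) :
    μ ⬝ᵥ discountedValue α P g = occupancy α P μ ⬝ᵥ g := by
  rw [discountedValue, occupancy, dotProduct_smul, smul_dotProduct, dotProduct_mulVec]

theorem discountedValue_sub_discountedValue {α : R} {P P' : Matrix ι ι R}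
    (hP : IsUnit (1 - α • P).det) (hP' : IsUnit (1 - α • P').det) (g g' : ι → R) :
    discountedValue α P' g' - discountedValue α P g =
      (1 - α • P')⁻¹ *ᵥ ((1 - α) • (g' - g) + α • ((P' - P) *ᵥ discountedValue α P g)) := by
  have hdiff : α • (P' - P) = (1 - α • P) - (1 - α • P') := by
    rw [smul_sub]; abel
  have hvalue : (1 - α • P) *ᵥ discountedValue α P g = (1 - α) • g := by
    rw [discountedValue, mulVec_smul, mulVec_mulVec, mul_nonsing_inv _ hP, one_mulVec]
  rw [← smul_mulVec, hdiff, sub_mulVec, hvalue, mulVec_add, mulVec_sub, mulVec_mulVec,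
    nonsing_inv_mul _ hP', one_mulVec]
  simp only [discountedValue, mulVec_smul, mulVec_sub, smul_sub]
  abel

theorem discountedValue_one {α : R} {P : Matrix ι ι R} (hP : IsUnit (1 - α • P).det)
    (hP1 : P *ᵥ 1 = 1) : discountedValue α P 1 = 1 := by
  have hrow : (1 - α • P) *ᵥ 1 = (1 - α) • (1 : ι → R) := by
    rw [sub_mulVec, one_mulVec, smul_mulVec, hP1, sub_smul, one_smul]
  rw [discountedValue, ← mulVec_smul, ← hrow, mulVec_mulVec, nonsing_inv_mul _ hP, one_mulVec]

theorem sum_occupancy {α : R} {P : Matrix ι ι R} (hP : IsUnit (1 - α • P).det)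
    (hP1 : P *ᵥ 1 = 1) (μ : ι → R) : ∑ i, occupancy α P μ i = ∑ i, μ i := by
  rw [← dotProduct_one, ← dotProduct_one, ← dotProduct_discountedValue, discountedValue_one hP hP1]

theorem dotProduct_discountedValue_mvReward {α : R} {P : Matrix ι ι R}
    (hP : IsUnit (1 - α • P).det) (hP1 : P *ᵥ 1 = 1) {μ : ι → R} (hμ : ∑ i, μ i = 1)
    (r : ι → R) (β l : R) :
    μ ⬝ᵥ discountedValue α P (mvReward β (occupancy α P μ ⬝ᵥ r) r) =
      μ ⬝ᵥ discountedValue α P (mvReward β l r) + β * (occupancy α P μ ⬝ᵥ r - l) ^ 2 := by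
  simp only [dotProduct_discountedValue]
  exact dotProduct_mvReward_of_dotProduct_eq (by rw [sum_occupancy hP hP1, hμ]) rfl β l

end Discounted

theorem isUnit_det_one_sub_smul_of_mem_rowStochastic {ι : Type*} [Fintype ι] [DecidableEq ι]
    {P : Matrix ι ι ℝ} (hP : P ∈ rowStochastic ℝ ι) {α : ℝ} (hα0 : 0 ≤ α) (hα1 : α < 1) :
    IsUnit (1 - α • P).det := by
  refine isUnit_iff_ne_zero.2 (det_ne_zero_of_sum_row_lt_diag fun k => ?_)
  have hoff : ∀ j ∈ Finset.univ.erase k, ‖(1 - α • P) k j‖ = α * P k j := fun j hj => by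
    rw [Matrix.sub_apply, Matrix.one_apply_ne (Finset.ne_of_mem_erase hj).symm,
      Matrix.smul_apply, smul_eq_mul, zero_sub, norm_neg,
      Real.norm_of_nonneg (mul_nonneg hα0 (nonneg_of_mem_rowStochastic hP))]
  have hdiag : ‖(1 - α • P) k k‖ = 1 - α * P k k := by
    rw [Matrix.sub_apply, Matrix.one_apply_eq, Matrix.smul_apply, smul_eq_mul,
      Real.norm_of_nonneg]
    nlinarith [nonneg_of_mem_rowStochastic hP (i := k) (j := k),
      le_one_of_mem_rowStochastic hP (i := k) (j := k)]
  calc ∑ j ∈ Finset.univ.erase k, ‖(1 - α • P) k j‖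
      = α * (1 - P k k) := by
        rw [Finset.sum_congr rfl hoff, ← Finset.mul_sum,
          Finset.sum_erase_eq_sub (Finset.mem_univ k), sum_row_of_mem_rowStochastic hP]
    _ < ‖(1 - α • P) k k‖ := by rw [hdiag]; linarith

theorem stmt_10_general {n : ℕ} (P P' : Matrix (Fin n) (Fin n) ℝ)
    (hPnn : ∀ i j, 0 ≤ P i j) (hProw : ∀ i, ∑ j, P i j = 1)
    (hP'nn : ∀ i j, 0 ≤ P' i j) (hP'row : ∀ i, ∑ j, P' i j = 1)
    (μ : Fin n → ℝ) (hμsum : ∑ i, μ i = 1)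
    (r r' : Fin n → ℝ) (α β l : ℝ) (hα0 : 0 < α) (hα1 : α < 1)
    (η η' ξ ξ' : ℝ) (f f' fl fl' ul : Fin n → ℝ)
    (hη : η = (1 - α) * ((μ ᵥ* (1 - α • P)⁻¹) ⬝ᵥ r))
    (hη' : η' = (1 - α) * ((μ ᵥ* (1 - α • P')⁻¹) ⬝ᵥ r'))
    (hf : f = fun i => r i - β * (r i - η) ^ 2)
    (hf' : f' = fun i => r' i - β * (r' i - η') ^ 2)
    (hξ : ξ = μ ⬝ᵥ ((1 - α) • ((1 - α • P)⁻¹ *ᵥ f)))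
    (hξ' : ξ' = μ ⬝ᵥ ((1 - α) • ((1 - α • P')⁻¹ *ᵥ f')))
    (hfl : fl = fun i => r i - β * (r i - l) ^ 2)
    (hfl' : fl' = fun i => r' i - β * (r' i - l) ^ 2)
    (hul : ul = (1 - α) • ((1 - α • P)⁻¹ *ᵥ fl)) :
    ξ' - ξ =
      μ ⬝ᵥ ((1 - α • P')⁻¹ *ᵥ ((1 - α) • (fl' - fl) + α • ((P' - P) *ᵥ ul)))
        + β * (η' - l) ^ 2 - β * (η - l) ^ 2 := by
  have hPs : P ∈ rowStochastic ℝ (Fin n) := mem_rowStochastic_iff_sum.2 ⟨hPnn, hProw⟩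
  have hP's : P' ∈ rowStochastic ℝ (Fin n) := mem_rowStochastic_iff_sum.2 ⟨hP'nn, hP'row⟩
  have hB := isUnit_det_one_sub_smul_of_mem_rowStochastic hPs hα0.le hα1
  have hB' := isUnit_det_one_sub_smul_of_mem_rowStochastic hP's hα0.le hα1
  have hηd : η = occupancy α P μ ⬝ᵥ r := by rw [hη, occupancy, smul_dotProduct, smul_eq_mul]
  have hηd' : η' = occupancy α P' μ ⬝ᵥ r' := by
    rw [hη', occupancy, smul_dotProduct, smul_eq_mul]
  have hξl : ξ = μ ⬝ᵥ ul + β * (η - l) ^ 2 := by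
    rw [hξ, hul, hf, hfl, hηd]
    exact dotProduct_discountedValue_mvReward hB hPs.2 hμsum r β l
  have hξl' : ξ' = μ ⬝ᵥ discountedValue α P' fl' + β * (η' - l) ^ 2 := by
    rw [hξ', hf', hfl', hηd']
    exact dotProduct_discountedValue_mvReward hB' hP's.2 hμsum r' β l
  have hdiff : μ ⬝ᵥ discountedValue α P' fl' - μ ⬝ᵥ ul =
      μ ⬝ᵥ ((1 - α • P')⁻¹ *ᵥ ((1 - α) • (fl' - fl) + α • ((P' - P) *ᵥ ul))) := by
    rw [← dotProduct_sub, hul, hfl]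
    exact congrArg _ (discountedValue_sub_discountedValue hB hB' (mvReward β l r) fl')
  rw [hξl, hξl', ← hdiff]
  ring

/-- Discounted mean-variance performance difference formula. -/
theorem stmt_10 {n : ℕ} (P P' : Matrix (Fin n) (Fin n) ℝ)
    (hPnn : ∀ i j, 0 ≤ P i j) (hProw : ∀ i, ∑ j, P i j = 1)
    (hP'nn : ∀ i j, 0 ≤ P' i j) (hP'row : ∀ i, ∑ j, P' i j = 1)
    (μ : Fin n → ℝ) (hμnn : ∀ i, 0 ≤ μ i) (hμsum : ∑ i, μ i = 1)
    (r r' : Fin n → ℝ) (α β l : ℝ) (hα0 : 0 < α) (hα1 : α < 1) (hβ : 0 < β)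
    (η η' ξ ξ' : ℝ) (f f' fl fl' ul : Fin n → ℝ)
    (hη : η = (1 - α) * ((μ ᵥ* (1 - α • P)⁻¹) ⬝ᵥ r))
    (hη' : η' = (1 - α) * ((μ ᵥ* (1 - α • P')⁻¹) ⬝ᵥ r'))
    (hf : f = fun i => r i - β * (r i - η) ^ 2)
    (hf' : f' = fun i => r' i - β * (r' i - η') ^ 2)
    (hξ : ξ = μ ⬝ᵥ ((1 - α) • ((1 - α • P)⁻¹ *ᵥ f)))
    (hξ' : ξ' = μ ⬝ᵥ ((1 - α) • ((1 - α • P')⁻¹ *ᵥ f')))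
    (hfl : fl = fun i => r i - β * (r i - l) ^ 2)
    (hfl' : fl' = fun i => r' i - β * (r' i - l) ^ 2)
    (hul : ul = (1 - α) • ((1 - α • P)⁻¹ *ᵥ fl)) :
    ξ' - ξ =
      μ ⬝ᵥ ((1 - α • P')⁻¹ *ᵥ ((1 - α) • (fl' - fl) + α • ((P' - P) *ᵥ ul)))
        + β * (η' - l) ^ 2 - β * (η - l) ^ 2 :=
  stmt_10_general P P' hPnn hProw hP'nn hP'row μ hμsum r r' α β l hα0 hα1 η η' ξ ξ' f f' fl fl' ul
    hη hη' hf hf' hξ hξ' hfl hfl' hul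
end

section
/- Problem equivalence with pseudo mean: for a finite set D of policies, with ξ_d the discounted mean-variance of policy d and ξ_{λ,d} = ξ_d - β(η_d - λ)^2 the pseudo discounted mean-variance, one has max_{d ∈ D} ξ_d = max_{d ∈ D} sup_{λ ∈ ℝ} ξ_{λ,d} = sup_{λ ∈ ℝ} max_{d ∈ D} ξ_{λ,d}. -/
open Finset

/-- Problem equivalence with pseudo mean:
`max_d ξ_d = max_d sup_λ ξ_{λ,d} = sup_λ max_d ξ_{λ,d}`. -/
theorem stmt_11 {ι : Type*} [DecidableEq ι] (D : Finset ι) (hD : D.Nonempty)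
    (ξ η : ι → ℝ) (β : ℝ) (hβ : 0 < β) :
    (D.sup' hD ξ = D.sup' hD (fun d => ⨆ l : ℝ, (ξ d - β * (η d - l) ^ 2))) ∧
    (D.sup' hD ξ = ⨆ l : ℝ, D.sup' hD (fun d => ξ d - β * (η d - l) ^ 2)) := by
  have hnonneg : ∀ d (l : ℝ), 0 ≤ β * (η d - l) ^ 2 := fun d l =>
    mul_nonneg hβ.le (sq_nonneg _)
  have hle : ∀ d (l : ℝ), ξ d - β * (η d - l) ^ 2 ≤ ξ d := fun d l =>
    sub_le_self _ (hnonneg d l)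
  have hbdd : ∀ d, BddAbove (Set.range fun l : ℝ => ξ d - β * (η d - l) ^ 2) := by
    intro d
    exact ⟨ξ d, by rintro x ⟨l, rfl⟩; exact hle d l⟩
  have hsup : ∀ d, (⨆ l : ℝ, (ξ d - β * (η d - l) ^ 2)) = ξ d := by
    intro d
    apply le_antisymm
    · exact ciSup_le fun l => hle d l
    · have := le_ciSup (hbdd d) (η d)
      simpa using this
  constructor
  · exact (Finset.sup'_congr hD rfl fun d _ => (hsup d).symm)
  · have hbdd2 : BddAbove (Set.range fun l : ℝ =>
        D.sup' hD (fun d => ξ d - β * (η d - l) ^ 2)) := by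
      refine ⟨D.sup' hD ξ, ?_⟩
      rintro x ⟨l, rfl⟩
      exact Finset.sup'_le _ _ fun d hd => le_trans (hle d l) (Finset.le_sup' ξ hd)
    apply le_antisymm
    · apply Finset.sup'_le
      intro d hd
      have h1 : ξ d ≤ D.sup' hD (fun d' => ξ d' - β * (η d' - η d) ^ 2) := by
        have := Finset.le_sup' (f := fun d' => ξ d' - β * (η d' - η d) ^ 2) hd
        simpa [-Finset.le_sup'_iff] using this
      exact h1.trans (le_ciSup hbdd2 (η d))
    · exact ciSup_le fun l =>
        Finset.sup'_le _ _ fun d hd => le_trans (hle d l) (Finset.le_sup' ξ hd)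
end

section
/- Performance derivative formula: with the interpolated system of the mixed policy d^{δ} as above, the map δ ↦ ξ^δ is differentiable at δ = 0 with derivative dξ/dδ|_{δ=0} = μ (I - αP)^{-1} [ (1-α)(f'_λ - f_λ) + α(P' - P) u_λ ] + 2β(η - λ) · (dη^δ/dδ)|_{δ=0}, where dη^δ/dδ|_{δ=0} = μ(I - αP)^{-1}[(1-α)(r' - r) + α(P' - P)v] and v = (1-α)(I-αP)^{-1} r. -/
open Matrix


section aux

attribute [local instance] Matrix.linftyOpNormedRing Matrix.linftyOpNormedAlgebra

variable {n : ℕ}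

noncomputable local instance : CompleteSpace (Matrix (Fin n) (Fin n) ℝ) :=
  FiniteDimensional.complete ℝ _

lemma norm_stoch_le (P : Matrix (Fin n) (Fin n) ℝ)
    (hPnn : ∀ i j, 0 ≤ P i j) (hProw : ∀ i, ∑ j, P i j = 1) : ‖P‖ ≤ 1 := by
  rw [Matrix.linfty_opNorm_def]
  norm_cast
  apply Finset.sup_le
  intro i _
  have h : ((∑ j, ‖P i j‖₊ : NNReal) : ℝ) = 1 := by
    push_cast
    have : ∀ j, ‖P i j‖ = P i j := fun j => by
      rw [Real.norm_eq_abs, abs_of_nonneg (hPnn i j)]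
    simp_rw [this]
    exact hProw i
  exact le_of_eq (by exact_mod_cast h)

lemma smul_stoch_norm_lt (P : Matrix (Fin n) (Fin n) ℝ)
    (hPnn : ∀ i j, 0 ≤ P i j) (hProw : ∀ i, ∑ j, P i j = 1)
    {α : ℝ} (hα0 : 0 < α) (hα1 : α < 1) : ‖α • P‖ < 1 := by
  rw [norm_smul]
  calc ‖α‖ * ‖P‖ ≤ ‖α‖ * 1 := by
        apply mul_le_mul_of_nonneg_left (norm_stoch_le P hPnn hProw) (norm_nonneg _)
    _ = |α| := by rw [Real.norm_eq_abs, mul_one]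
    _ < 1 := by rw [abs_of_pos hα0]; exact hα1

/-- entry evaluation as a CLM -/
noncomputable def entryCLM (i j : Fin n) : Matrix (Fin n) (Fin n) ℝ →L[ℝ] ℝ :=
  LinearMap.toContinuousLinearMap
    { toFun := fun M => M i j
      map_add' := fun _ _ => rfl
      map_smul' := fun _ _ => rfl }

lemma inv_entry_hasDerivAt (P P' : Matrix (Fin n) (Fin n) ℝ)
    (hPnn : ∀ i j, 0 ≤ P i j) (hProw : ∀ i, ∑ j, P i j = 1)
    {α : ℝ} (hα0 : 0 < α) (hα1 : α < 1) (i j : Fin n) :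
    HasDerivAt (fun δ : ℝ => (1 - α • (P + δ • (P' - P)))⁻¹ i j)
      (((1 - α • P)⁻¹ * (α • (P' - P)) * (1 - α • P)⁻¹) i j) 0 := by
  set B : Matrix (Fin n) (Fin n) ℝ := 1 - α • P with hB
  set C : Matrix (Fin n) (Fin n) ℝ := α • (P' - P) with hC
  have hu : ‖α • P‖ < 1 := smul_stoch_norm_lt P hPnn hProw hα0 hα1
  set u : (Matrix (Fin n) (Fin n) ℝ)ˣ := Units.oneSub (α • P) hu with husmul
  have hub : (u : Matrix (Fin n) (Fin n) ℝ) = B := rfl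
  -- affine map
  have hm : HasDerivAt (fun δ : ℝ => 1 - α • (P + δ • (P' - P))) (-C) 0 := by
    have h1 : (fun δ : ℝ => 1 - α • (P + δ • (P' - P))) = fun δ : ℝ => B + δ • (-C) := by
      funext δ
      simp only [hB, hC, smul_add, smul_smul, smul_neg]
      module
    rw [h1]
    refine (((hasDerivAt_id' (0:ℝ)).smul_const (-C)).const_add B).congr_deriv ?_
    simp
  have h2 : HasDerivAt (fun δ : ℝ => Ring.inverse (1 - α • (P + δ • (P' - P))))
      (B⁻¹ * C * B⁻¹) 0 := by
    have hfd := hasFDerivAt_ringInverse (𝕜 := ℝ) u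
    rw [Matrix.coe_units_inv, hub] at hfd
    have hf0 : (1 : Matrix (Fin n) (Fin n) ℝ) - α • (P + (0:ℝ) • (P' - P)) = B := by
      simp [hB]
    rw [← hf0] at hfd
    refine (hfd.comp_hasDerivAt 0 hm).congr_deriv ?_
    simp only [ContinuousLinearMap.neg_apply, ContinuousLinearMap.mulLeftRight_apply]
    rw [hf0]
    noncomm_ring
  have h3 : (fun δ : ℝ => Ring.inverse (1 - α • (P + δ • (P' - P))))
      = fun δ : ℝ => (1 - α • (P + δ • (P' - P)))⁻¹ := by
    funext δ; rw [Matrix.nonsing_inv_eq_ringInverse]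
  rw [h3] at h2
  exact ((entryCLM i j).hasFDerivAt.comp_hasDerivAt 0 h2)

end aux

section main

variable {n : ℕ}

lemma dot_mulVec_eq (μ x : Fin n → ℝ) (M : Matrix (Fin n) (Fin n) ℝ) :
    μ ⬝ᵥ (M *ᵥ x) = ∑ j, (∑ i, μ i * M i j) * x j := by
  simp only [dotProduct, Matrix.mulVec, Finset.mul_sum, Finset.sum_mul]
  rw [Finset.sum_comm]
  exact Finset.sum_congr rfl fun j _ => Finset.sum_congr rfl fun i _ => by ring

lemma scalar_hasDerivAt (P P' : Matrix (Fin n) (Fin n) ℝ)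
    (hPnn : ∀ i j, 0 ≤ P i j) (hProw : ∀ i, ∑ j, P i j = 1)
    {α : ℝ} (hα0 : 0 < α) (hα1 : α < 1) (μ x Δx : Fin n → ℝ) :
    HasDerivAt (fun δ : ℝ => (μ ᵥ* (1 - α • (P + δ • (P' - P)))⁻¹) ⬝ᵥ (x + δ • Δx))
      (μ ⬝ᵥ (((1 - α • P)⁻¹ * (α • (P' - P)) * (1 - α • P)⁻¹) *ᵥ x)
        + μ ⬝ᵥ ((1 - α • P)⁻¹ *ᵥ Δx)) 0 := by
  set D : Matrix (Fin n) (Fin n) ℝ := (1 - α • P)⁻¹ * (α • (P' - P)) * (1 - α • P)⁻¹ with hD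
  have hB0 : (1 - α • (P + (0:ℝ) • (P' - P)))⁻¹ = (1 - α • P)⁻¹ := by simp
  have hfun : (fun δ : ℝ => (μ ᵥ* (1 - α • (P + δ • (P' - P)))⁻¹) ⬝ᵥ (x + δ • Δx))
      = fun δ : ℝ => ∑ j, (∑ i, μ i * (1 - α • (P + δ • (P' - P)))⁻¹ i j)
          * (x j + δ * Δx j) := by
    funext δ
    simp only [dotProduct, Matrix.vecMul, Pi.add_apply, Pi.smul_apply, smul_eq_mul]
  rw [hfun]
  have key : HasDerivAt (fun δ : ℝ => ∑ j, (∑ i, μ i * (1 - α • (P + δ • (P' - P)))⁻¹ i j)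
      * (x j + δ * Δx j))
      (∑ j, ((∑ i, μ i * D i j) * x j + (∑ i, μ i * (1 - α • P)⁻¹ i j) * Δx j)) 0 := by
    apply HasDerivAt.fun_sum
    intro j _
    have h1 : HasDerivAt (fun δ : ℝ => ∑ i, μ i * (1 - α • (P + δ • (P' - P)))⁻¹ i j)
        (∑ i, μ i * D i j) 0 :=
      HasDerivAt.fun_sum fun i _ =>
        (inv_entry_hasDerivAt P P' hPnn hProw hα0 hα1 i j).const_mul (μ i)
    have h2 : HasDerivAt (fun δ : ℝ => x j + δ * Δx j) (Δx j) 0 := by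
      simpa using ((hasDerivAt_id (0:ℝ)).mul_const (Δx j)).const_add (x j)
    have h3 := h1.mul h2
    refine h3.congr_deriv ?_
    simp [hB0]
  convert key using 1
  rw [dot_mulVec_eq, dot_mulVec_eq, ← Finset.sum_add_distrib]

end main

/-- Performance derivative formula: `δ ↦ ξ^δ` is differentiable at `δ = 0`
with derivative
`μ(I-αP)⁻¹[(1-α)(f'_λ - f_λ) + α(P'-P)u_λ] + 2β(η-λ)·dη/dδ`, where
`dη/dδ = μ(I-αP)⁻¹[(1-α)(r'-r) + α(P'-P)v]` and `v = (1-α)(I-αP)⁻¹ r`. -/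
theorem stmt_18 {n : ℕ} (P P' : Matrix (Fin n) (Fin n) ℝ)
    (hPnn : ∀ i j, 0 ≤ P i j) (hProw : ∀ i, ∑ j, P i j = 1)
    (hP'nn : ∀ i j, 0 ≤ P' i j) (hP'row : ∀ i, ∑ j, P' i j = 1)
    (μ : Fin n → ℝ) (hμnn : ∀ i, 0 ≤ μ i) (hμsum : ∑ i, μ i = 1)
    (α β l : ℝ) (hα0 : 0 < α) (hα1 : α < 1) (hβ : 0 < β)
    (r r' : Fin n → ℝ)
    (fl fl' v ul : Fin n → ℝ)
    (hfl : fl = fun i => r i - β * (r i - l) ^ 2)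
    (hfl' : fl' = fun i => r' i - β * (r' i - l) ^ 2)
    (hv : v = (1 - α) • ((1 - α • P)⁻¹ *ᵥ r))
    (hul : ul = (1 - α) • ((1 - α • P)⁻¹ *ᵥ fl))
    (η : ℝ) (hη : η = (1 - α) * ((μ ᵥ* (1 - α • P)⁻¹) ⬝ᵥ r))
    (ξfun : ℝ → ℝ)
    (hξfun : ∀ δ : ℝ, ξfun δ =
      (1 - α) * ((μ ᵥ* (1 - α • (P + δ • (P' - P)))⁻¹) ⬝ᵥ (fl + δ • (fl' - fl)))
        + β * ((1 - α) * ((μ ᵥ* (1 - α • (P + δ • (P' - P)))⁻¹) ⬝ᵥ (r + δ • (r' - r))) - l) ^ 2) :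
    HasDerivAt ξfun
      (μ ⬝ᵥ ((1 - α • P)⁻¹ *ᵥ ((1 - α) • (fl' - fl) + α • ((P' - P) *ᵥ ul)))
        + 2 * β * (η - l) *
          (μ ⬝ᵥ ((1 - α • P)⁻¹ *ᵥ ((1 - α) • (r' - r) + α • ((P' - P) *ᵥ v))))) 0 := by

  have Hfl := scalar_hasDerivAt P P' hPnn hProw hα0 hα1 μ fl (fl' - fl)
  have Hr := scalar_hasDerivAt P P' hPnn hProw hα0 hα1 μ r (r' - r)
  have hB0 : (1 - α • (P + (0:ℝ) • (P' - P)))⁻¹ = (1 - α • P)⁻¹ := by simp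
  have hfeq : ξfun = fun δ =>
      (1 - α) * ((μ ᵥ* (1 - α • (P + δ • (P' - P)))⁻¹) ⬝ᵥ (fl + δ • (fl' - fl)))
        + β * ((1 - α) * ((μ ᵥ* (1 - α • (P + δ • (P' - P)))⁻¹) ⬝ᵥ (r + δ • (r' - r))) - l) ^ 2 :=
    funext hξfun
  rw [hfeq]
  have H := (Hfl.const_mul (1 - α)).add
    ((((Hr.const_mul (1 - α)).sub_const l).pow 2).const_mul β)
  refine H.congr_deriv ?_
  have hg0 : (μ ᵥ* (1 - α • (P + (0:ℝ) • (P' - P)))⁻¹) ⬝ᵥ (r + (0:ℝ) • (r' - r))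
      = (μ ᵥ* (1 - α • P)⁻¹) ⬝ᵥ r := by simp
  rw [hg0, ← hη]
  subst hv hul
  simp only [Matrix.mulVec_add, Matrix.mulVec_smul, Matrix.mulVec_mulVec,
    Matrix.smul_mulVec, Matrix.mul_smul, Matrix.smul_mul, dotProduct_add,
    dotProduct_smul, smul_eq_mul, pow_one, mul_assoc, Matrix.mul_assoc]
  ring
end

section
/- Local optimality from the Bellman local-optimality equation: suppose the value function u^# of policy d^# (with matrix P^#, reward r^#, mean η^# = (1-α)μ(I - αP^#)^{-1} r^#, and u^# = (1-α)(I - αP^#)^{-1} f^# where f^# = r^# - β(r^# - η^# e)_⊙^2) satisfies, for every alternative policy with data (P', r'), the componentwise inequality (1-α) f'_{η^#} + α P' u^# ≤ u^#, where f'_{η^#} = r' - β(r' - η^# e)_⊙^2. Then for every alternative policy, the one-sided derivative of the mean-variance along the mixing direction toward that policy is nonpositive: dξ/dδ|_{δ=0} = μ (I - αP^#)^{-1} [ (1-α)(f'_{η^#} - f^#) + α(P' - P^#) u^# ] ≤ 0. -/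
/-!
Under the Bellman inequality and the fixed-point equation for `u^#`, the vector
`v = (1-α)(f'_{η#} - f^#) + α(P' - P^#)u^#` equals `(1-α)f'_{η#} + αP'u^# - u^#`, hence is
componentwise nonpositive. The resolvent `(I - αP^#)⁻¹` of a substochastic matrix with
`0 ≤ α < 1` is monotone by the discrete maximum principle (at a maximal coordinate `k`,
`w ≤ αP^# w` forces `w k ≤ α w k`), so `(I - αP^#)⁻¹ v ≤ 0`, and pairing with the
nonnegative `μ` gives the claim.
-/

open Matrix

namespace Matrix

variable {ι : Type*} [Fintype ι] {P : Matrix ι ι ℝ} {α : ℝ}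

theorem nonpos_of_le_smul_mulVec (hP : ∀ i j, 0 ≤ P i j) (hProw : ∀ i, ∑ j, P i j ≤ 1)
    (hα0 : 0 ≤ α) (hα1 : α < 1) {w : ι → ℝ} (hw : w ≤ α • (P *ᵥ w)) : w ≤ 0 := by
  intro i
  have : Nonempty ι := ⟨i⟩
  obtain ⟨k, hk⟩ := Finite.exists_max w
  suffices w k ≤ 0 from (hk i).trans this
  by_contra! hpos
  have hPw : (P *ᵥ w) k ≤ w k :=
    calc (P *ᵥ w) k = ∑ j, P k j * w j := rfl
      _ ≤ ∑ j, P k j * w k :=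
          Finset.sum_le_sum fun j _ => mul_le_mul_of_nonneg_left (hk j) (hP k j)
      _ = (∑ j, P k j) * w k := (Finset.sum_mul ..).symm
      _ ≤ w k := mul_le_of_le_one_left hpos.le (hProw k)
  have hwk : w k ≤ α * (P *ᵥ w) k := hw k
  nlinarith [mul_le_mul_of_nonneg_left hPw hα0]

variable [DecidableEq ι]

theorem one_sub_smul_mulVec (w : ι → ℝ) : (1 - α • P) *ᵥ w = w - α • (P *ᵥ w) := by
  rw [sub_mulVec, one_mulVec, smul_mulVec]

theorem isUnit_one_sub_smul (hP : ∀ i j, 0 ≤ P i j) (hProw : ∀ i, ∑ j, P i j ≤ 1)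
    (hα0 : 0 ≤ α) (hα1 : α < 1) : IsUnit (1 - α • P) := by
  refine mulVec_injective_iff_isUnit.mp fun x y hxy => ?_
  have hker : ∀ z : ι → ℝ, (1 - α • P) *ᵥ z = 0 → z ≤ 0 := fun z hz => by
    rw [one_sub_smul_mulVec, sub_eq_zero] at hz
    exact nonpos_of_le_smul_mulVec hP hProw hα0 hα1 hz.le
  exact le_antisymm (sub_nonpos.mp (hker _ (by rw [mulVec_sub, hxy, sub_self])))
    (sub_nonpos.mp (hker _ (by rw [mulVec_sub, hxy, sub_self])))

theorem inv_one_sub_smul_mulVec_nonpos (hP : ∀ i j, 0 ≤ P i j)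
    (hProw : ∀ i, ∑ j, P i j ≤ 1) (hα0 : 0 ≤ α) (hα1 : α < 1) {v : ι → ℝ} (hv : v ≤ 0) :
    (1 - α • P)⁻¹ *ᵥ v ≤ 0 := by
  have hdet : IsUnit (1 - α • P).det :=
    (isUnit_iff_isUnit_det _).mp (isUnit_one_sub_smul hP hProw hα0 hα1)
  set w := (1 - α • P)⁻¹ *ᵥ v
  have hMw : w - α • (P *ᵥ w) = v := by
    rw [← one_sub_smul_mulVec, mulVec_mulVec, mul_nonsing_inv _ hdet, one_mulVec]
  refine nonpos_of_le_smul_mulVec hP hProw hα0 hα1 ?_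
  rw [← sub_nonpos, hMw]
  exact hv

end Matrix

theorem stmt_19_general {n : ℕ} (Psharp P' : Matrix (Fin n) (Fin n) ℝ)
    (hPnn : ∀ i j, 0 ≤ Psharp i j) (hProw : ∀ i, ∑ j, Psharp i j = 1)
    (μ : Fin n → ℝ) (hμnn : ∀ i, 0 ≤ μ i)
    (α : ℝ) (hα0 : 0 < α) (hα1 : α < 1)
    (fsharp f'η : Fin n → ℝ)
    (usharp : Fin n → ℝ)
    (hfix : usharp = (1 - α) • fsharp + α • (Psharp *ᵥ usharp))
    (hBellman : ∀ x, ((1 - α) • f'η + α • (P' *ᵥ usharp)) x ≤ usharp x) :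
    μ ⬝ᵥ ((1 - α • Psharp)⁻¹ *ᵥ
        ((1 - α) • (f'η - fsharp) + α • ((P' - Psharp) *ᵥ usharp))) ≤ 0 := by
  have hv : (1 - α) • (f'η - fsharp) + α • ((P' - Psharp) *ᵥ usharp) ≤ 0 := by
    intro i
    have hBi := hBellman i
    have hfixi := congrFun hfix i
    simp only [Pi.add_apply, Pi.smul_apply, Pi.sub_apply, Pi.zero_apply, smul_eq_mul,
      sub_mulVec] at hBi hfixi ⊢
    linarith
  have hw := inv_one_sub_smul_mulVec_nonpos hPnn (fun i => (hProw i).le) hα0.le hα1 hv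
  simpa using dotProduct_le_dotProduct_of_nonneg_left hw hμnn

/-- Local optimality from the Bellman local-optimality equation: if `u^#`
satisfies the componentwise inequality `(1-α) f'_{η#} + α P' u^# ≤ u^#` for an
alternative policy `(P', r')`, then the derivative of the mean-variance along
the mixing direction toward that policy is nonpositive. -/
theorem stmt_19 {n : ℕ} (Psharp P' : Matrix (Fin n) (Fin n) ℝ)
    (hPnn : ∀ i j, 0 ≤ Psharp i j) (hProw : ∀ i, ∑ j, Psharp i j = 1)
    (hP'nn : ∀ i j, 0 ≤ P' i j) (hP'row : ∀ i, ∑ j, P' i j = 1)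
    (μ : Fin n → ℝ) (hμnn : ∀ i, 0 ≤ μ i) (hμsum : ∑ i, μ i = 1)
    (α β : ℝ) (hα0 : 0 < α) (hα1 : α < 1) (hβ : 0 < β)
    (rsharp r' : Fin n → ℝ) (ηsharp : ℝ)
    (hηsharp : ηsharp = (1 - α) * ((μ ᵥ* (1 - α • Psharp)⁻¹) ⬝ᵥ rsharp))
    (fsharp f'η : Fin n → ℝ)
    (hfsharp : fsharp = fun i => rsharp i - β * (rsharp i - ηsharp) ^ 2)
    (hf'η : f'η = fun i => r' i - β * (r' i - ηsharp) ^ 2)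
    (usharp : Fin n → ℝ)
    (husharp : usharp = (1 - α) • ((1 - α • Psharp)⁻¹ *ᵥ fsharp))
    (hfix : usharp = (1 - α) • fsharp + α • (Psharp *ᵥ usharp))
    (hBellman : ∀ x, ((1 - α) • f'η + α • (P' *ᵥ usharp)) x ≤ usharp x) :
    μ ⬝ᵥ ((1 - α • Psharp)⁻¹ *ᵥ
        ((1 - α) • (f'η - fsharp) + α • ((P' - Psharp) *ᵥ usharp))) ≤ 0 :=
  stmt_19_general Psharp P' hPnn hProw μ hμnn α hα0 hα1 fsharp f'η usharp hfix hBellman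
end
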